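/- Let C be a small category with pullbacks equipped with a Grothendieck pretopology, and let φ : F → G be a map of sheaves of groupoids on C (i.e. presheaves of groupoids whose presheaf of objects and presheaf of morphisms are sheaves of sets). Then φ induces an isomorphism on sheaves of homotopy groups if and only if φ(X) is fully faithful for every X ∈ C and φ satisfies the local lifting condition (L1). -/

import Mathlib

set_option linter.unusedSectionVars false

open CategoryTheory Opposite Limits

universe u

variable {C : Type u} [Category.{u} C] [HasPullbacks C]

section Pi0Aut

variable {F G : Cᵒᵖ ⥤ Grpd.{u, u}}

lemma grpd_map_obj_id (F : Cᵒᵖ ⥤ Grpd.{u, u}) (X : Cᵒᵖ) (a : F.obj X) :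
    (F.map (𝟙 X)).obj a = a := by rw [F.map_id]; rfl

lemma grpd_map_obj_comp (F : Cᵒᵖ ⥤ Grpd.{u, u}) {X Y Z : Cᵒᵖ} (g : X ⟶ Y) (h : Y ⟶ Z)
    (a : F.obj X) : (F.map (g ≫ h)).obj a = (F.map h).obj ((F.map g).obj a) := by
  rw [F.map_comp]; rfl

lemma res_res (F : Cᵒᵖ ⥤ Grpd.{u, u}) {V W T : C} (g : V ⟶ W) (h : W ⟶ T)
    (x : F.obj (op T)) :
    (F.map g.op).obj ((F.map h.op).obj x) = (F.map (g ≫ h).op).obj x := by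
  rw [op_comp, F.map_comp]; rfl

lemma nat_obj_eq (φ : F ⟶ G) {X Y : C} (h : Y ⟶ X) (a : F.obj (op X)) :
    (φ.app (op Y)).obj ((F.map h.op).obj a) = (G.map h.op).obj ((φ.app (op X)).obj a) :=
  congrArg (fun Φ : ↑(F.obj (op X)) ⥤ ↑(G.obj (op Y)) => Φ.obj a) (φ.naturality h.op)

/-- The presheaf `π₀F` of isomorphism classes of a presheaf of groupoids. -/
def pi0 (F : Cᵒᵖ ⥤ Grpd.{u, u}) : Cᵒᵖ ⥤ Type u where
  obj X := Quot (fun a b : F.obj X => Nonempty (a ≅ b))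
  map {X Y} g := TypeCat.ofHom (Quot.map (F.map g).obj
    (fun a b e => e.elim fun e => ⟨(F.map g).mapIso e⟩))
  map_id X := by
    ext q
    obtain ⟨a⟩ := q
    exact congrArg (Quot.mk _) (grpd_map_obj_id F X a)
  map_comp {X Y Z} g h := by
    ext q
    obtain ⟨a⟩ := q
    exact congrArg (Quot.mk _) (grpd_map_obj_comp F g h a)

/-- The map induced on `π₀` by a map of presheaves of groupoids. -/
def pi0Map (φ : F ⟶ G) : pi0 F ⟶ pi0 G where
  app X := TypeCat.ofHom (Quot.map (φ.app X).obj
    (fun a b e => e.elim fun e => ⟨(φ.app X).mapIso e⟩))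
  naturality X Y g := by
    ext q
    obtain ⟨a⟩ := q
    exact congrArg (Quot.mk _)
      (congrArg (fun Φ : ↑(F.obj X) ⥤ ↑(G.obj Y) => Φ.obj a) (φ.naturality g))

lemma aut_eq (F : Cᵒᵖ ⥤ Grpd.{u, u}) {X : C} (a : F.obj (op X)) {g g' : (Over X)ᵒᵖ}
    (h : g ⟶ g') :
    (F.map g'.unop.hom.op).obj a =
      (F.map h.unop.left.op).obj ((F.map g.unop.hom.op).obj a) := by
  rw [res_res, Over.w h.unop]

/-- The presheaf of automorphism groups `Aut_F(a)` on `C/X`, for `a ∈ F(X)` (in a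
groupoid, the endomorphisms of an object are exactly its automorphisms). -/
def autPre (F : Cᵒᵖ ⥤ Grpd.{u, u}) (X : C) (a : F.obj (op X)) : (Over X)ᵒᵖ ⥤ Type u where
  obj g := ((F.map g.unop.hom.op).obj a ⟶ (F.map g.unop.hom.op).obj a)
  map {g g'} h := TypeCat.ofHom fun e =>
    eqToHom (aut_eq F a h) ≫ (F.map h.unop.left.op).map e ≫ eqToHom (aut_eq F a h).symm
  map_id := by
    intro g
    ext e
    change eqToHom _ ≫ (F.map (𝟙 g : g ⟶ g).unop.left.op).map e ≫ eqToHom _ = e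
    have h : (𝟙 g : g ⟶ g).unop.left = 𝟙 g.unop.left := rfl
    have h2 := Functor.congr_hom (show F.map ((𝟙 g : g ⟶ g).unop.left.op) = 𝟙 _ by
      rw [h, op_id, F.map_id]) e
    simp only [h2, eqToHom_trans]
    simp only [show ((𝟙 (F.obj (op g.unop.left)) : _ ⟶ _)).map e = e from rfl]
    simp
  map_comp := by
    intro g g' g'' h h'
    ext e
    change eqToHom _ ≫ (F.map (h ≫ h').unop.left.op).map e ≫ eqToHom _ =
      eqToHom _ ≫ (F.map h'.unop.left.op).map
        (eqToHom _ ≫ (F.map h.unop.left.op).map e ≫ eqToHom _) ≫ eqToHom _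
    have h2 := Functor.congr_hom (show F.map ((h ≫ h').unop.left.op)
        = F.map h.unop.left.op ≫ F.map h'.unop.left.op by
      rw [show (h ≫ h').unop.left = h'.unop.left ≫ h.unop.left from rfl, op_comp,
        F.map_comp]) e
    simp only [types_comp_apply, h2]
    rw [show ∀ {A B : ↑(F.obj (op g.unop.left))} (x : A ⟶ B),
        ((F.map h.unop.left.op ≫ F.map h'.unop.left.op)).map x
        = (F.map h'.unop.left.op).map ((F.map h.unop.left.op).map x) from fun _ => rfl]
    simp [eqToHom_map]

/-- The map induced by `φ : F ⟶ G` on automorphism presheaves. -/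
def autMap (φ : F ⟶ G) (X : C) (a : F.obj (op X)) :
    autPre F X a ⟶ autPre G X ((φ.app (op X)).obj a) where
  app g := TypeCat.ofHom fun e =>
    eqToHom (nat_obj_eq φ g.unop.hom a).symm ≫ (φ.app (op g.unop.left)).map e ≫
      eqToHom (nat_obj_eq φ g.unop.hom a)
  naturality := by
    intro g g' h
    ext e
    have h2 := Functor.congr_hom (φ.naturality h.unop.left.op) e
    change eqToHom _ ≫ (φ.app (op g'.unop.left)).map
        (eqToHom _ ≫ (F.map h.unop.left.op).map e ≫ eqToHom _) ≫ eqToHom _ =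
      eqToHom _ ≫ (G.map h.unop.left.op).map
        (eqToHom _ ≫ (φ.app (op g.unop.left)).map e ≫ eqToHom _) ≫ eqToHom _
    change (φ.app (op g'.unop.left)).map ((F.map h.unop.left.op).map e) =
      eqToHom _ ≫ (G.map h.unop.left.op).map ((φ.app (op g.unop.left)).map e) ≫ eqToHom _ at h2
    try simp only [types_comp_apply, autPre]
    simp [h2, eqToHom_map]

variable (K : Pretopology C)

/-- A map of presheaves of groupoids induces an isomorphism on sheaves of homotopy
groups if the sheafification of `π₀φ` is an isomorphism and, for every `X` and every
object `a` of `F(X)`, the sheafification of `Aut_F(a) ⟶ Aut_G(φ(a))` is an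
isomorphism of sheaves on `C/X`. -/
def InducesIsoOnHomotopySheaves (φ : F ⟶ G) : Prop :=
  IsIso ((presheafToSheaf (K.toGrothendieck) (Type u)).map (pi0Map φ)) ∧
  ∀ (X : C) (a : F.obj (op X)),
    IsIso ((presheafToSheaf ((K.toGrothendieck).over X) (Type u)).map (autMap φ X a))

/-- The local lifting conditions (L1), (L2), (L3) for a map of presheaves of
groupoids. -/
structure LocalLiftingConditions (φ : F ⟶ G) : Prop where
  obj_lift : ∀ (X : C) (b : G.obj (op X)),
    ∃ (ι : Type u) (V : ι → C) (g : ∀ i, V i ⟶ X),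
      Presieve.ofArrows V g ∈ K.coverings X ∧
      ∀ i, ∃ a : F.obj (op (V i)),
        Nonempty ((φ.app (op (V i))).obj a ≅ (G.map (g i).op).obj b)
  hom_lift : ∀ (X : C) (a a' : F.obj (op X))
    (k : (φ.app (op X)).obj a ⟶ (φ.app (op X)).obj a'),
    ∃ (ι : Type u) (V : ι → C) (g : ∀ i, V i ⟶ X),
      Presieve.ofArrows V g ∈ K.coverings X ∧
      ∀ i, ∃ h : (F.map (g i).op).obj a ⟶ (F.map (g i).op).obj a',
        (φ.app (op (V i))).map h =
          eqToHom (nat_obj_eq φ (g i) a) ≫ (G.map (g i).op).map k ≫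
            eqToHom (nat_obj_eq φ (g i) a').symm
  hom_sep : ∀ (X : C) (a : F.obj (op X)) (h : a ⟶ a),
    (φ.app (op X)).map h = 𝟙 ((φ.app (op X)).obj a) →
    ∃ (ι : Type u) (V : ι → C) (g : ∀ i, V i ⟶ X),
      Presieve.ofArrows V g ∈ K.coverings X ∧
      ∀ i, (F.map (g i).op).map h = 𝟙 ((F.map (g i).op).obj a)

end Pi0Aut

section ObMor

variable {F G : Cᵒᵖ ⥤ Grpd.{u, u}}

/-- The presheaf of objects of a presheaf of groupoids. -/
def obPresheaf (F : Cᵒᵖ ⥤ Grpd.{u, u}) : Cᵒᵖ ⥤ Type u where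
  obj X := F.obj X
  map g := TypeCat.ofHom (F.map g).obj
  map_id X := by ext a; exact grpd_map_obj_id F X a
  map_comp g h := by ext a; exact grpd_map_obj_comp F g h a

lemma sigma_hom_ext {A : Type u} [Groupoid.{u} A] {a b a' b' : A} (f : a ⟶ b)
    (g : a' ⟶ b') (ha : a = a') (hb : b = b')
    (hfg : f = eqToHom ha ≫ g ≫ eqToHom hb.symm) :
    (⟨(a, b), f⟩ : Σ ab : A × A, ab.1 ⟶ ab.2) = ⟨(a', b'), g⟩ := by
  subst ha; subst hb; simp at hfg; subst hfg; rfl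

/-- The presheaf of morphisms of a presheaf of groupoids. -/
def morPresheaf (F : Cᵒᵖ ⥤ Grpd.{u, u}) : Cᵒᵖ ⥤ Type u where
  obj X := Σ ab : ↑(F.obj X) × ↑(F.obj X), ab.1 ⟶ ab.2
  map {X Y} g := TypeCat.ofHom fun m => ⟨((F.map g).obj m.1.1, (F.map g).obj m.1.2), (F.map g).map m.2⟩
  map_id X := by
    apply TypeCat.homEquiv.injective
    funext m
    obtain ⟨⟨a, b⟩, f⟩ := m
    exact sigma_hom_ext _ _ (grpd_map_obj_id F X a) (grpd_map_obj_id F X b)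
      (Functor.congr_hom (F.map_id X) f)
  map_comp {X Y Z} g h := by
    apply TypeCat.homEquiv.injective
    funext m
    obtain ⟨⟨a, b⟩, f⟩ := m
    exact sigma_hom_ext _ _ (grpd_map_obj_comp F g h a) (grpd_map_obj_comp F g h b)
      (Functor.congr_hom (F.map_comp g h) f)

/-- The map induced on presheaves of objects. -/
def obMap (φ : F ⟶ G) : obPresheaf F ⟶ obPresheaf G where
  app X := TypeCat.ofHom (φ.app X).obj
  naturality X Y g := by
    ext a
    exact congrArg (fun Φ : ↑(F.obj X) ⥤ ↑(G.obj Y) => Φ.obj a) (φ.naturality g)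

/-- The map induced on presheaves of morphisms. -/
def morMap (φ : F ⟶ G) : morPresheaf F ⟶ morPresheaf G where
  app X := TypeCat.ofHom fun m => ⟨((φ.app X).obj m.1.1, (φ.app X).obj m.1.2), (φ.app X).map m.2⟩
  naturality X Y g := by
    apply TypeCat.homEquiv.injective
    funext m
    obtain ⟨⟨a, b⟩, f⟩ := m
    exact sigma_hom_ext _ _
      (congrArg (fun Φ : ↑(F.obj X) ⥤ ↑(G.obj Y) => Φ.obj a) (φ.naturality g))
      (congrArg (fun Φ : ↑(F.obj X) ⥤ ↑(G.obj Y) => Φ.obj b) (φ.naturality g))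
      (Functor.congr_hom (φ.naturality g) f)

end ObMor

/-- Condition (L1): local lifting of objects. -/
def LocalLiftL1 (K : Pretopology C) {F G : Cᵒᵖ ⥤ Grpd.{u, u}} (φ : F ⟶ G) : Prop :=
  ∀ (X : C) (b : G.obj (op X)),
    ∃ (ι : Type u) (V : ι → C) (g : ∀ i, V i ⟶ X),
      Presieve.ofArrows V g ∈ K.coverings X ∧
      ∀ i, ∃ a : F.obj (op (V i)),
        Nonempty ((φ.app (op (V i))).obj a ≅ (G.map (g i).op).obj b)

/-!
The presheaves `Aut_F(a)` sit inside the sheaf of morphisms of `F`, and an isomorphism after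
sheafification is the same as a locally bijective map, so everything becomes a statement about
morphisms on covers. Faithfulness: if `φ u = φ v` for endomorphisms `u, v` of `a`, local
injectivity on automorphisms makes `u` and `v` agree on a cover, hence everywhere since morphisms
of `F` form a separated presheaf. Fullness: given `k : φ a ⟶ φ a'`, local injectivity of `π₀φ`
gives isomorphisms `r : a ≅ a'` on a cover, and local surjectivity on automorphisms lifts
`k ≫ φ r⁻¹` on a finer cover, so `k` lifts locally; by faithfulness the local lifts are compatible,
they glue in the sheaf of morphisms of `F`, and the glued morphism maps to `k` because morphisms of
`G` form a separated presheaf. Condition (L1) is local surjectivity of `π₀φ`. Conversely, objectwise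
full faithfulness makes `π₀φ` injective and `Aut_F(a) ⟶ Aut_G(φ a)` an isomorphism, while (L1)
makes `π₀φ` locally surjective.
-/

lemma isIso_presheafToSheaf_map_iff {D : Type u} [Category.{u} D] (J : GrothendieckTopology D)
    {P Q : Dᵒᵖ ⥤ Type u} (f : P ⟶ Q) :
    IsIso ((presheafToSheaf J (Type u)).map f) ↔
      Presheaf.IsLocallyInjective J f ∧ Presheaf.IsLocallySurjective J f :=
  (J.W_iff f).symm.trans (J.W_iff_isLocallyBijective f)

section SigmaHom

variable {A B : Type u} [Category.{u} A] [Category.{u} B]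

-- Morphisms are compared as elements of the Σ-type underlying `morPresheaf`: as `F.map (g ≫ f)`
-- and `F.map f ⋙ F.map g` agree only propositionally, equality there absorbs the `eqToHom`
-- transports between endpoints.
abbrev sigmaHom {x y : A} (p : x ⟶ y) : Σ ab : A × A, ab.1 ⟶ ab.2 := ⟨(x, y), p⟩

lemma sigmaHom_inj {x y : A} {p q : x ⟶ y} : sigmaHom p = sigmaHom q ↔ p = q := by
  simp

lemma exists_sigmaHom_eq (m : Σ ab : A × A, ab.1 ⟶ ab.2) {x y : A} (hx : m.1.1 = x)
    (hy : m.1.2 = y) : ∃ p : x ⟶ y, sigmaHom p = m := by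
  obtain ⟨⟨x', y'⟩, p⟩ := m
  subst hx hy
  exact ⟨p, rfl⟩

lemma sigmaHom_comp_congr {x y z x' y' z' : A} {p : x ⟶ y} {q : y ⟶ z} {p' : x' ⟶ y'}
    {q' : y' ⟶ z'} (hp : sigmaHom p = sigmaHom p') (hq : sigmaHom q = sigmaHom q') :
    sigmaHom (p ≫ q) = sigmaHom (p' ≫ q') := by
  obtain ⟨hxy, hpp⟩ := Sigma.mk.inj_iff.1 hp
  obtain ⟨hyz, hqq⟩ := Sigma.mk.inj_iff.1 hq
  simp only [Prod.mk.injEq] at hxy hyz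
  obtain ⟨rfl, rfl⟩ := hxy
  obtain ⟨-, rfl⟩ := hyz
  rw [eq_of_heq hpp, eq_of_heq hqq]

lemma sigmaHom_map_congr (Φ : A ⥤ B) {x y x' y' : A} {p : x ⟶ y} {p' : x' ⟶ y'}
    (h : sigmaHom p = sigmaHom p') :
    sigmaHom (Φ.map p) = sigmaHom (Φ.map p') := by
  obtain ⟨hxy, hpp⟩ := Sigma.mk.inj_iff.1 h
  simp only [Prod.mk.injEq] at hxy
  obtain ⟨rfl, rfl⟩ := hxy
  rw [eq_of_heq hpp]

lemma sigmaHom_eq_of_map_eq (Φ : A ⥤ B) [Φ.Faithful] {x y x' y' : A} {p : x ⟶ y}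
    {q : x' ⟶ y'} (hx : x = x') (hy : y = y')
    (h : sigmaHom (Φ.map p) = sigmaHom (Φ.map q)) : sigmaHom p = sigmaHom q := by
  subst hx hy
  rw [sigmaHom_inj] at h ⊢
  exact Φ.map_injective h

end SigmaHom

section MorPresheaf

variable {F G : Cᵒᵖ ⥤ Grpd.{u, u}}

lemma morPresheaf_map_sigmaHom {X Y : Cᵒᵖ} (f : X ⟶ Y) {x y : F.obj X} (p : x ⟶ y) :
    (morPresheaf F).map f (sigmaHom p) = sigmaHom ((F.map f).map p) := rfl

lemma sigmaHom_naturality (φ : F ⟶ G) {X Y : Cᵒᵖ} (f : X ⟶ Y) {x y : F.obj X} (p : x ⟶ y) :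
    sigmaHom ((φ.app Y).map ((F.map f).map p)) = sigmaHom ((G.map f).map ((φ.app X).map p)) :=
  NatTrans.naturality_apply (morMap φ) f (sigmaHom p)

lemma sigmaHom_autPre_map {X : C} (a : F.obj (op X)) {g g' : (Over X)ᵒᵖ} (w : g ⟶ g')
    (e : (autPre F X a).obj g) :
    sigmaHom ((autPre F X a).map w e) = (morPresheaf F).map w.unop.left.op (sigmaHom e) :=
  sigma_hom_ext _ _ (aut_eq F a w) (aut_eq F a w) rfl

lemma sigmaHom_autMap_app (φ : F ⟶ G) {X : C} (a : F.obj (op X)) (g : (Over X)ᵒᵖ)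
    (e : (autPre F X a).obj g) :
    sigmaHom ((autMap φ X a).app g e) = sigmaHom ((φ.app _).map e) :=
  sigma_hom_ext _ _ (nat_obj_eq φ _ a).symm (nat_obj_eq φ _ a).symm rfl

lemma pi0_mk_eq_iff {X : Cᵒᵖ} {a b : F.obj X} :
    (Quot.mk _ a : (pi0 F).obj X) = Quot.mk _ b ↔ Nonempty (a ≅ b) := by
  rw [Quot.eq]
  exact Equivalence.eqvGen_iff ⟨fun a => ⟨Iso.refl a⟩, fun ⟨e⟩ => ⟨e.symm⟩,
    fun ⟨e⟩ ⟨e'⟩ => ⟨e.trans e'⟩⟩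

end MorPresheaf

section OfFullyFaithful

variable {F G : Cᵒᵖ ⥤ Grpd.{u, u}} (φ : F ⟶ G)

lemma pi0Map_app_injective (X : Cᵒᵖ) [(φ.app X : _ ⥤ _).Full] [(φ.app X : _ ⥤ _).Faithful] :
    Function.Injective ((pi0Map φ).app X) := by
  rintro ⟨a⟩ ⟨a'⟩ h
  obtain ⟨e⟩ := pi0_mk_eq_iff.1 h
  exact Quot.sound ⟨(φ.app X : _ ⥤ _).preimageIso e⟩

lemma autMap_app_eq_iff {X : C} (a : F.obj (op X)) (g : (Over X)ᵒᵖ)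
    {e e' : (autPre F X a).obj g} :
    (autMap φ X a).app g e = (autMap φ X a).app g e' ↔
      (φ.app (op g.unop.left)).map e = (φ.app (op g.unop.left)).map e' := by
  constructor
  · intro h
    have h' := congrArg sigmaHom h
    rwa [sigmaHom_autMap_app, sigmaHom_autMap_app, sigmaHom_inj] at h'
  · intro h
    have h' := sigmaHom_autMap_app φ a g e
    rw [h, ← sigmaHom_autMap_app] at h'
    exact sigmaHom_inj.1 h'

lemma autMap_app_bijective {X : C} (a : F.obj (op X)) (g : (Over X)ᵒᵖ)
    [(φ.app (op g.unop.left) : _ ⥤ _).Full] [(φ.app (op g.unop.left) : _ ⥤ _).Faithful] :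
    Function.Bijective ((autMap φ X a).app g) := by
  constructor
  · exact fun e e' h => (φ.app (op g.unop.left) : _ ⥤ _).map_injective
      ((autMap_app_eq_iff φ a g).1 h)
  · intro e
    obtain ⟨p, hp⟩ := exists_sigmaHom_eq (sigmaHom e) (nat_obj_eq φ _ a).symm
      (nat_obj_eq φ _ a).symm
    refine ⟨(φ.app (op g.unop.left) : _ ⥤ _).preimage p, sigmaHom_inj.1 ?_⟩
    have h := sigmaHom_autMap_app φ a g ((φ.app (op g.unop.left) : _ ⥤ _).preimage p)
    rwa [Functor.map_preimage, hp] at h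

lemma autMap_isIso [∀ X, (φ.app X : _ ⥤ _).Full] [∀ X, (φ.app X : _ ⥤ _).Faithful]
    (X : C) (a : F.obj (op X)) : IsIso (autMap φ X a) := by
  have (g : (Over X)ᵒᵖ) : IsIso ((autMap φ X a).app g) :=
    (isIso_iff_bijective _).2 (autMap_app_bijective φ a g)
  exact NatIso.isIso_of_isIso_app _

lemma isLocallySurjective_pi0Map (K : Pretopology C) (hL1 : LocalLiftL1 K φ) :
    Presheaf.IsLocallySurjective K.toGrothendieck (pi0Map φ) := by
  refine ⟨fun {X} => ?_⟩
  rintro ⟨b⟩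
  obtain ⟨ι, V, g, hcov, hlift⟩ := hL1 X b
  refine ⟨Presieve.ofArrows V g, hcov, ?_⟩
  rintro Y f ⟨i⟩
  obtain ⟨a, ⟨e⟩⟩ := hlift i
  exact ⟨Quot.mk _ a, Quot.sound ⟨e⟩⟩

lemma localLiftL1_of_isLocallySurjective (K : Pretopology C)
    [Presheaf.IsLocallySurjective K.toGrothendieck (pi0Map φ)] : LocalLiftL1 K φ := by
  intro X b
  obtain ⟨R, hR, hle⟩ := Presheaf.imageSieve_mem K.toGrothendieck (pi0Map φ)
    (U := op X) (Quot.mk _ b)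
  obtain ⟨ι, V, g, rfl⟩ := R.exists_eq_ofArrows
  refine ⟨ι, V, g, hR, fun i => ?_⟩
  obtain ⟨⟨a⟩, ha⟩ := hle _ _ (Presieve.ofArrows.mk i)
  exact ⟨a, pi0_mk_eq_iff.1 ha⟩

end OfFullyFaithful

section Faithful

variable {J : GrothendieckTopology C} {F G : Cᵒᵖ ⥤ Grpd.{u, u}} (φ : F ⟶ G)

lemma eq_of_locally_eq (hF : Presieve.IsSeparated J (morPresheaf F)) {X : C} {S : Sieve X}
    (hS : S ∈ J X) {x y : F.obj (op X)} {p q : x ⟶ y}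
    (h : ∀ ⦃Z⦄ (f : Z ⟶ X), S f → (F.map f.op).map p = (F.map f.op).map q) : p = q :=
  sigmaHom_inj.1 <| (hF S hS).ext fun _ f hf => by
    rw [morPresheaf_map_sigmaHom, morPresheaf_map_sigmaHom, h f hf]

lemma exists_covering_map_eq_of_app_map_eq {X : C} (a : F.obj (op X))
    [Presheaf.IsLocallyInjective (J.over X) (autMap φ X a)] {u v : a ⟶ a}
    (h : (φ.app (op X)).map u = (φ.app (op X)).map v) :
    ∃ S ∈ J X, ∀ ⦃Z⦄ (f : Z ⟶ X), S f → (F.map f.op).map u = (F.map f.op).map v := by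
  let Y := Over.mk (𝟙 X)
  have ha := (grpd_map_obj_id F (op X) a).symm
  obtain ⟨e, he⟩ : ∃ e : (autPre F X a).obj (op Y), sigmaHom e = sigmaHom u :=
    exists_sigmaHom_eq _ ha ha
  obtain ⟨e', he'⟩ : ∃ e' : (autPre F X a).obj (op Y), sigmaHom e' = sigmaHom v :=
    exists_sigmaHom_eq _ ha ha
  have hee' : (autMap φ X a).app (op Y) e = (autMap φ X a).app (op Y) e' := by
    refine (autMap_app_eq_iff φ a _).2 (sigmaHom_inj.1 ?_)
    rw [sigmaHom_map_congr _ he, sigmaHom_map_congr _ he']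
    exact congrArg sigmaHom h
  refine ⟨_, (J.mem_over_iff (Y := Y) _).1
    (Presheaf.equalizerSieve_mem (J.over X) (autMap φ X a) (X := op Y) e e' hee'),
    fun Z f hf => sigmaHom_inj.1 ?_⟩
  have hf' : (autPre F X a).map (Over.homMk f : Over.mk (f ≫ Y.hom) ⟶ Y).op e =
      (autPre F X a).map (Over.homMk f : Over.mk (f ≫ Y.hom) ⟶ Y).op e' :=
    (Sieve.overEquiv_iff (Presheaf.equalizerSieve (F := autPre F X a) e e') f).1 hf
  have hf'' := congrArg sigmaHom hf'
  rwa [sigmaHom_autPre_map, sigmaHom_autPre_map, he, he'] at hf''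

lemma app_faithful (hF : Presieve.IsSeparated J (morPresheaf F))
    [∀ X a, Presheaf.IsLocallyInjective (J.over X) (autMap φ X a)] (X : Cᵒᵖ) :
    (φ.app X : _ ⥤ _).Faithful where
  map_injective {a a'} h h' hφ := by
    obtain ⟨S, hS, hloc⟩ := exists_covering_map_eq_of_app_map_eq (J := J) φ (X := X.unop) a
      (u := h ≫ inv h') (v := 𝟙 a) (by simp [hφ])
    have key : h ≫ inv h' = 𝟙 a := eq_of_locally_eq hF hS hloc
    rwa [IsIso.comp_inv_eq, Category.id_comp] at key

end Faithful

section Full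

variable {J : GrothendieckTopology C} {F G : Cᵒᵖ ⥤ Grpd.{u, u}} (φ : F ⟶ G)

def HasLift {Z : Cᵒᵖ} (x y : F.obj Z) (m : (morPresheaf G).obj Z) : Prop :=
  ∃ h : x ⟶ y, sigmaHom ((φ.app Z).map h) = m

variable {φ}

lemma HasLift.of_eq {Z : Cᵒᵖ} {x y x' y' : F.obj Z} {m : (morPresheaf G).obj Z}
    (hm : HasLift φ x y m) (hx : x = x') (hy : y = y') : HasLift φ x' y' m := by
  subst hx hy
  exact hm

lemma HasLift.map {Z Z' : Cᵒᵖ} {x y : F.obj Z} {m : (morPresheaf G).obj Z}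
    (hm : HasLift φ x y m) (f : Z ⟶ Z') :
    HasLift φ ((F.map f).obj x) ((F.map f).obj y) ((morPresheaf G).map f m) := by
  obtain ⟨h, rfl⟩ := hm
  exact ⟨(F.map f).map h, sigmaHom_naturality φ f h⟩

lemma HasLift.comp {Z : Cᵒᵖ} {x y z : F.obj Z} {b b' b'' : G.obj Z} {k : b ⟶ b'}
    {k' : b' ⟶ b''} (hk : HasLift φ x y (sigmaHom k)) (hk' : HasLift φ y z (sigmaHom k')) :
    HasLift φ x z (sigmaHom (k ≫ k')) := by
  obtain ⟨h, hh⟩ := hk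
  obtain ⟨h', hh'⟩ := hk'
  exact ⟨h ≫ h', by rw [Functor.map_comp]; exact sigmaHom_comp_congr hh hh'⟩

variable (φ)

lemma hasLift_app_map {Z : Cᵒᵖ} {x y : F.obj Z} (h : x ⟶ y) :
    HasLift φ x y (sigmaHom ((φ.app Z).map h)) :=
  ⟨h, rfl⟩

def liftSieve {X : C} (a a' : F.obj (op X)) (m : (morPresheaf G).obj (op X)) : Sieve X where
  arrows _ f := HasLift φ ((F.map f.op).obj a) ((F.map f.op).obj a') ((morPresheaf G).map f.op m)
  downward_closed {_ _} f hf g := by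
    have hg := hf.map g.op
    rw [← Functor.map_comp_apply, ← op_comp] at hg
    exact hg.of_eq (res_res F g f a) (res_res F g f a')

lemma liftSieve_pullback {X Z : C} (a a' : F.obj (op X)) (m : (morPresheaf G).obj (op X))
    (f : Z ⟶ X) :
    (liftSieve φ a a' m).pullback f =
      liftSieve φ ((F.map f.op).obj a) ((F.map f.op).obj a') ((morPresheaf G).map f.op m) := by
  ext Y g
  simp only [Sieve.pullback_apply, liftSieve, op_comp, Functor.map_comp_apply]
  exact ⟨fun hg => hg.of_eq (res_res F g f a).symm (res_res F g f a').symm,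
    fun hg => hg.of_eq (res_res F g f a) (res_res F g f a')⟩

lemma liftSieve_le_liftSieve_comp {Z : C} {x y z : F.obj (op Z)} {b : G.obj (op Z)}
    (k : b ⟶ (φ.app (op Z)).obj y) (t : y ⟶ z) :
    liftSieve φ x y (sigmaHom k) ≤ liftSieve φ x z (sigmaHom (k ≫ (φ.app (op Z)).map t)) := by
  intro W g hg
  have ht := hasLift_app_map φ ((F.map g.op).map t)
  rw [sigmaHom_naturality] at ht
  have hkt := HasLift.comp (k := (G.map g.op).map k) hg ht
  rwa [← Functor.map_comp] at hkt

lemma liftSieve_mem_of_isLocallySurjective {X Z : C} (a : F.obj (op X)) (f : Z ⟶ X)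
    [Presheaf.IsLocallySurjective (J.over X) (autMap φ X a)]
    (e : (autPre G X ((φ.app (op X)).obj a)).obj (op (Over.mk f))) :
    liftSieve φ ((F.map f.op).obj a) ((F.map f.op).obj a) (sigmaHom e) ∈ J Z := by
  refine J.superset_covering (fun W g hg => ?_) ((J.mem_over_iff _).1
    (Presheaf.imageSieve_mem (J.over X) (autMap φ X a) (U := op (Over.mk f)) e))
  obtain ⟨s, hs⟩ := (Sieve.overEquiv_iff (Y := Over.mk f) _ g).1 hg
  have hs' := congrArg sigmaHom hs
  rw [sigmaHom_autMap_app, sigmaHom_autPre_map] at hs'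
  exact HasLift.of_eq ⟨s, hs'⟩ (res_res F g f a).symm (res_res F g f a).symm

lemma liftSieve_mem [Presheaf.IsLocallyInjective J (pi0Map φ)]
    [∀ X a, Presheaf.IsLocallySurjective (J.over X) (autMap φ X a)] {X : C}
    (a a' : F.obj (op X)) (k : (φ.app (op X)).obj a ⟶ (φ.app (op X)).obj a') :
    liftSieve φ a a' (sigmaHom k) ∈ J X := by
  refine J.transitive (Presheaf.equalizerSieve_mem J (pi0Map φ) (X := op X) (Quot.mk _ a)
    (Quot.mk _ a') (Quot.sound ⟨asIso k⟩)) _ fun Z f hf => ?_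
  obtain ⟨r⟩ := pi0_mk_eq_iff.1 hf
  -- along `f`, `r : a ≅ a'` reduces lifting `k` to lifting the automorphism `k ≫ φ r⁻¹` of `φ a`
  obtain ⟨k', hk'⟩ := exists_sigmaHom_eq ((morPresheaf G).map f.op (sigmaHom k))
    (nat_obj_eq φ f a).symm (nat_obj_eq φ f a').symm
  obtain ⟨e, he⟩ : ∃ e : (autPre G X ((φ.app (op X)).obj a)).obj (op (Over.mk f)),
      sigmaHom e = sigmaHom (k' ≫ (φ.app (op Z)).map r.inv) :=
    exists_sigmaHom_eq _ (nat_obj_eq φ f a) (nat_obj_eq φ f a)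
  have hmem := liftSieve_mem_of_isLocallySurjective (J := J) φ a f e
  have hle := liftSieve_le_liftSieve_comp φ (x := (F.map f.op).obj a)
    (k' ≫ (φ.app (op Z)).map r.inv) r.hom
  rw [Category.assoc, r.map_inv_hom_id, Category.comp_id] at hle
  rw [he] at hmem
  rw [liftSieve_pullback φ a a' (sigmaHom k) f, ← hk']
  exact J.superset_covering hle hmem

lemma hasLift_of_liftSieve_mem (hFo : Presieve.IsSeparated J (obPresheaf F))
    (hFm : Presieve.IsSheaf J (morPresheaf F)) (hGm : Presieve.IsSeparated J (morPresheaf G))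
    [∀ X, (φ.app X : _ ⥤ _).Faithful] {X : C} {a a' : F.obj (op X)}
    {m : (morPresheaf G).obj (op X)} (hm : liftSieve φ a a' m ∈ J X) : HasLift φ a a' m := by
  let T := liftSieve φ a a' m
  choose lift hlift using fun Z (f : Z ⟶ X) (hf : T f) => hf
  let x : Presieve.FamilyOfElements (morPresheaf F) T.arrows :=
    fun Z f hf => sigmaHom (lift Z f hf)
  have hx : x.Compatible := by
    rw [Presieve.compatible_iff_sieveCompatible]
    intro Z Z' f g hf
    refine sigmaHom_eq_of_map_eq (φ.app _) (res_res F g f a).symm (res_res F g f a').symm ?_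
    rw [hlift, sigmaHom_naturality, op_comp, Functor.map_comp_apply]
    exact congrArg ((morPresheaf G).map g.op) (hlift Z f hf).symm
  obtain ⟨M, hM, -⟩ := hFm T hm x hx
  obtain ⟨h, rfl⟩ := exists_sigmaHom_eq M
    ((hFo T hm).ext fun Z f hf => congrArg (fun m => m.1.1) (hM f hf))
    ((hFo T hm).ext fun Z f hf => congrArg (fun m => m.1.2) (hM f hf))
  refine ⟨h, (hGm T hm).ext fun Z f hf => ?_⟩
  rw [← hlift Z f hf, ← sigmaHom_map_congr _ (hM f hf)]
  exact (sigmaHom_naturality φ f.op h).symm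

lemma app_full (hFo : Presieve.IsSeparated J (obPresheaf F))
    (hFm : Presieve.IsSheaf J (morPresheaf F)) (hGm : Presieve.IsSeparated J (morPresheaf G))
    [∀ X, (φ.app X : _ ⥤ _).Faithful] [Presheaf.IsLocallyInjective J (pi0Map φ)]
    [∀ X a, Presheaf.IsLocallySurjective (J.over X) (autMap φ X a)] (X : Cᵒᵖ) :
    (φ.app X : _ ⥤ _).Full where
  map_surjective {a a'} k := by
    obtain ⟨h, hh⟩ :=
      hasLift_of_liftSieve_mem φ hFo hFm hGm (liftSieve_mem φ (X := X.unop) a a' k)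
    exact ⟨h, sigmaHom_inj.1 hh⟩

end Full

theorem sheaves_inducesIso_iff_general (K : Pretopology C) {F G : Cᵒᵖ ⥤ Grpd.{u, u}}
    (φ : F ⟶ G)
    (hFo : Presieve.IsSheaf (K.toGrothendieck) (obPresheaf F))
    (hFm : Presieve.IsSheaf (K.toGrothendieck) (morPresheaf F))
    (hGm : Presieve.IsSheaf (K.toGrothendieck) (morPresheaf G)) :
    InducesIsoOnHomotopySheaves K φ ↔
      ((∀ X : Cᵒᵖ, (φ.app X : _ ⥤ _).Full ∧ (φ.app X : _ ⥤ _).Faithful) ∧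
        LocalLiftL1 K φ) := by
  simp only [InducesIsoOnHomotopySheaves, isIso_presheafToSheaf_map_iff]
  constructor
  · rintro ⟨⟨_, _⟩, haut⟩
    have (X) (a : F.obj (op X)) := (haut X a).1
    have (X) (a : F.obj (op X)) := (haut X a).2
    have := app_faithful φ hFm.isSeparated
    exact ⟨fun X => ⟨app_full φ hFo.isSeparated hFm hGm.isSeparated X, inferInstance⟩,
      localLiftL1_of_isLocallySurjective φ K⟩
  · rintro ⟨hff, hL1⟩
    have (X : Cᵒᵖ) := (hff X).1
    have (X : Cᵒᵖ) := (hff X).2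
    have := autMap_isIso φ
    exact ⟨⟨Presheaf.isLocallyInjective_of_injective _ _ (fun X => pi0Map_app_injective φ X),
      isLocallySurjective_pi0Map φ K hL1⟩, fun _ _ => ⟨inferInstance, inferInstance⟩⟩

/-- A map of sheaves of groupoids (presheaves of groupoids whose presheaves of
objects and morphisms are sheaves) induces an isomorphism on sheaves of homotopy
groups if and only if it is objectwise fully faithful and satisfies the local
lifting condition (L1). -/
theorem sheaves_inducesIso_iff (K : Pretopology C) {F G : Cᵒᵖ ⥤ Grpd.{u, u}}
    (φ : F ⟶ G)
    (hFo : Presieve.IsSheaf (K.toGrothendieck) (obPresheaf F))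
    (hFm : Presieve.IsSheaf (K.toGrothendieck) (morPresheaf F))
    (hGo : Presieve.IsSheaf (K.toGrothendieck) (obPresheaf G))
    (hGm : Presieve.IsSheaf (K.toGrothendieck) (morPresheaf G)) :
    InducesIsoOnHomotopySheaves K φ ↔
      ((∀ X : Cᵒᵖ, (φ.app X : _ ⥤ _).Full ∧ (φ.app X : _ ⥤ _).Faithful) ∧
        LocalLiftL1 K φ) :=
  sheaves_inducesIso_iff_general K φ hFo hFm hGm
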